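/- Let p be an odd prime, let n be an odd natural number, q = p^n, and let m > 1 be an even integer with 2m ∣ q − 1. Then the generalized Paley graph Γ = Γ_{q,m} satisfies ω(Γ) ≠ χ(Γ). -/
import Mathlib

set_option linter.unusedSectionVars false
set_option maxHeartbeats 1600000

/-- The set `S_{q,m}` of `m`-th powers of nonzero elements of a field. -/
def mthPowers (F : Type*) [Field F] (m : ℕ) : Set F :=
  {x : F | ∃ a : F, a ≠ 0 ∧ a ^ m = x}

/-- The generalized Paley graph `Γ_{q,m}`: vertices are field elements, and distinct
`α, β` are adjacent iff `α - β` is an `m`-th power.  (When `2m ∣ q - 1`, the relation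
`α - β ∈ S_{q,m}` is symmetric, so the symmetrization below coincides with it.) -/
def paleyGraph (F : Type*) [Field F] (m : ℕ) : SimpleGraph F :=
  SimpleGraph.fromRel (fun a b => a - b ∈ mthPowers F m)

namespace Stmt16Aux

open Finset

variable {F : Type*} [Field F] [Fintype F] [DecidableEq F] {m : ℕ}

/-- The `m`-th powers as a `Finset`. -/
def Sfin (F : Type*) [Field F] [Fintype F] [DecidableEq F] (m : ℕ) : Finset F :=
  Finset.image (fun u : Fˣ => (u : F) ^ m) Finset.univ

lemma mem_Sfin {x : F} : x ∈ Sfin F m ↔ x ∈ mthPowers F m := by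
  simp only [Sfin, mem_image, mem_univ, true_and, mthPowers, Set.mem_setOf_eq]
  constructor
  · rintro ⟨u, rfl⟩; exact ⟨(u : F), u.ne_zero, rfl⟩
  · rintro ⟨a, ha, rfl⟩; exact ⟨Units.mk0 a ha, rfl⟩

lemma mthPowers_mul {x y : F} (hx : x ∈ mthPowers F m) (hy : y ∈ mthPowers F m) :
    x * y ∈ mthPowers F m := by
  obtain ⟨a, ha, rfl⟩ := hx
  obtain ⟨b, hb, rfl⟩ := hy
  exact ⟨a * b, mul_ne_zero ha hb, by rw [mul_pow]⟩

lemma Sfin_mul_mem {x y : F} (hx : x ∈ Sfin F m) (hy : y ∈ Sfin F m) :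
    x * y ∈ Sfin F m :=
  mem_Sfin.mpr (mthPowers_mul (mem_Sfin.mp hx) (mem_Sfin.mp hy))

lemma Sfin_ne_zero {x : F} (hx : x ∈ Sfin F m) : x ≠ 0 := by
  obtain ⟨a, ha, rfl⟩ := mem_Sfin.mp hx
  exact pow_ne_zero _ ha

lemma Sfin_image_mul {δ : F} (hδ : δ ∈ Sfin F m) :
    Finset.image (δ * ·) (Sfin F m) = Sfin F m := by
  apply Finset.eq_of_subset_of_card_le
  · intro x hx
    obtain ⟨s, hs, rfl⟩ := mem_image.mp hx
    exact Sfin_mul_mem hδ hs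
  · rw [Finset.card_image_of_injective _ (mul_right_injective₀ (Sfin_ne_zero hδ))]

lemma paley_adj (hneg : (-1 : F) ∈ mthPowers F m) {x y : F} :
    (paleyGraph F m).Adj x y ↔ x ≠ y ∧ x - y ∈ Sfin F m := by
  unfold paleyGraph
  rw [SimpleGraph.fromRel_adj]
  simp only [mem_Sfin]
  constructor
  · rintro ⟨hne, h | h⟩
    · exact ⟨hne, h⟩
    · refine ⟨hne, ?_⟩
      have := mthPowers_mul hneg h
      rwa [neg_one_mul, neg_sub] at this
  · rintro ⟨hne, h⟩; exact ⟨hne, Or.inl h⟩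

lemma clique_sub_mem (hneg : (-1 : F) ∈ mthPowers F m) {Cs : Finset F}
    (h : (paleyGraph F m).IsClique (Cs : Set F)) {c c' : F} (hc : c ∈ Cs) (hc' : c' ∈ Cs)
    (hne : c ≠ c') : c - c' ∈ Sfin F m := by
  have := h (Finset.mem_coe.mpr hc) (Finset.mem_coe.mpr hc') hne
  exact ((paley_adj hneg).mp this).2

lemma neg_one_mem (hm : m ≠ 0) (hdvd : 2 * m ∣ Fintype.card F - 1) :
    (-1 : F) ∈ mthPowers F m := by
  obtain ⟨g, hg⟩ := IsCyclic.exists_generator (α := Fˣ)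
  have hord : orderOf g = Fintype.card F - 1 := by
    rw [orderOf_eq_card_of_forall_mem_zpowers hg, Nat.card_eq_fintype_card, Fintype.card_units]
  obtain ⟨t, ht⟩ := hdvd
  have ht' : Fintype.card F - 1 = 2 * (m * t) := by rw [ht]; ring
  have hq2 : 1 < Fintype.card F := Fintype.one_lt_card
  have hmt : 0 < m * t := by
    rcases Nat.eq_zero_or_pos (m * t) with h | h
    · omega
    · exact h
  set y : Fˣ := g ^ (m * t) with hy
  have hysq : y * y = 1 := by
    rw [hy, ← pow_add, ← pow_orderOf_eq_one g, hord]
    congr 1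
    omega
  have hyne : y ≠ 1 := by
    intro hcon
    have h2 : orderOf g ∣ m * t := orderOf_dvd_of_pow_eq_one hcon
    rw [hord] at h2
    have := Nat.le_of_dvd hmt h2
    omega
  have hyF : (y : F) = -1 := by
    have h1 : (y : F) * (y : F) = 1 := by
      rw [← Units.val_mul, hysq, Units.val_one]
    rcases mul_self_eq_one_iff.mp h1 with h | h
    · exact absurd (Units.ext h) hyne
    · exact h
  refine ⟨((g ^ t : Fˣ) : F), Units.ne_zero _, ?_⟩
  rw [← Units.val_pow_eq_pow_val, ← pow_mul, mul_comm t m, ← hy, hyF]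

lemma card_Sfin_mul (hm : m ≠ 0) (hdvd : m ∣ Fintype.card F - 1) :
    m * (Sfin F m).card = Fintype.card F - 1 := by
  obtain ⟨g, hg⟩ := IsCyclic.exists_generator (α := Fˣ)
  have hord : orderOf g = Fintype.card F - 1 := by
    rw [orderOf_eq_card_of_forall_mem_zpowers hg, Nat.card_eq_fintype_card, Fintype.card_units]
  have hq2 : 1 < Fintype.card F := Fintype.one_lt_card
  set q1 := Fintype.card F - 1 with hq1
  have hq1pos : 0 < q1 := by omega
  set e := q1 / m with he
  have hem : m * e = q1 := Nat.mul_div_cancel' hdvd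
  have hepos : 0 < e := by
    rcases Nat.eq_zero_or_pos e with h | h
    · rw [h, mul_zero] at hem; omega
    · exact h
  set ζ := g ^ e with hζ
  have hζm : ζ ^ m = 1 := by
    rw [hζ, ← pow_mul, mul_comm, hem, ← hord, pow_orderOf_eq_one]
  have hordζ : orderOf ζ = m := by
    rw [hζ, orderOf_pow, hord]
    have hgcd : Nat.gcd q1 e = e := Nat.gcd_eq_right ⟨m, by rw [← hem]; ring⟩
    rw [hgcd, ← hem, Nat.mul_div_cancel m hepos]
  have hroots : ∀ w : Fˣ, w ^ m = 1 ↔ w ∈ Subgroup.zpowers ζ := by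
    intro w
    constructor
    · intro hw
      obtain ⟨j, hj⟩ := hg w
      have hj' : g ^ j = w := hj
      have hdvd2 : ((orderOf g : ℕ) : ℤ) ∣ j * m := by
        rw [orderOf_dvd_iff_zpow_eq_one, zpow_mul, hj']
        exact_mod_cast hw
      rw [hord] at hdvd2
      have hq1e : ((q1 : ℕ) : ℤ) = (m : ℤ) * (e : ℤ) := by exact_mod_cast hem.symm
      rw [hq1e] at hdvd2
      have hediv : (e : ℤ) ∣ j := by
        have h2 : (m : ℤ) * (e : ℤ) ∣ (m : ℤ) * j := by
          rwa [mul_comm j (m : ℤ)] at hdvd2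
        exact (mul_dvd_mul_iff_left (by exact_mod_cast hm : (m : ℤ) ≠ 0)).mp h2
      obtain ⟨j', rfl⟩ := hediv
      refine ⟨j', ?_⟩
      show ζ ^ j' = w
      rw [hζ, ← zpow_natCast g e, ← zpow_mul, ← hj']
    · rintro ⟨j, rfl⟩
      show (ζ ^ j) ^ m = 1
      rw [← zpow_natCast, ← zpow_mul, mul_comm, zpow_mul, zpow_natCast, hζm, one_zpow]
  have hcard_roots : (Finset.univ.filter (fun w : Fˣ => w ^ m = 1)).card = m := by
    have h1 : Fintype.card {w : Fˣ // w ^ m = 1} = m := by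
      rw [Fintype.card_congr (Equiv.subtypeEquivRight hroots), Fintype.card_zpowers, hordζ]
    rw [← Fintype.card_subtype]
    exact h1
  have hfib : Fintype.card Fˣ =
      ∑ x ∈ (Finset.image (fun u : Fˣ => (u : F) ^ m) Finset.univ),
        (Finset.univ.filter (fun u : Fˣ => (u : F) ^ m = x)).card := by
    rw [← Finset.card_univ (α := Fˣ)]
    exact Finset.card_eq_sum_card_fiberwise (fun u _ => Finset.mem_image_of_mem _ (mem_univ u))
  have hfib2 : ∀ x ∈ (Finset.image (fun u : Fˣ => (u : F) ^ m) Finset.univ),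
      (Finset.univ.filter (fun u : Fˣ => (u : F) ^ m = x)).card = m := by
    intro x hx
    obtain ⟨u₀, -, hu₀⟩ := Finset.mem_image.mp hx
    have hbij : (Finset.univ.filter (fun u : Fˣ => (u : F) ^ m = x)).card
        = (Finset.univ.filter (fun w : Fˣ => w ^ m = 1)).card := by
      apply Finset.card_bij' (fun u _ => u₀⁻¹ * u) (fun w _ => u₀ * w)
      · intro u hu
        rw [Finset.mem_filter] at hu ⊢
        refine ⟨mem_univ _, ?_⟩
        apply Units.ext
        rw [Units.val_pow_eq_pow_val, Units.val_mul, mul_pow, Units.val_one]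
        have hh : ((u₀⁻¹ : Fˣ) : F) = ((u₀ : F))⁻¹ := by simp
        rw [hh, inv_pow, hu.2, hu₀]
        exact inv_mul_cancel₀ (by rw [← hu₀]; exact pow_ne_zero _ (Units.ne_zero _))
      · intro w hw
        rw [Finset.mem_filter] at hw ⊢
        refine ⟨mem_univ _, ?_⟩
        rw [Units.val_mul, mul_pow, hu₀]
        have hh : ((w : F)) ^ m = 1 := by
          calc ((w : F)) ^ m = ((w ^ m : Fˣ) : F) := by rw [Units.val_pow_eq_pow_val]
            _ = 1 := by rw [hw.2, Units.val_one]
        rw [hh, mul_one]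
      · intro u hu; group
      · intro w hw; group
    rw [hbij, hcard_roots]
  have : m * (Finset.image (fun u : Fˣ => (u : F) ^ m) Finset.univ).card = q1 := by
    rw [Fintype.card_units, ← hq1] at hfib
    rw [Finset.sum_congr rfl hfib2, Finset.sum_const, smul_eq_mul] at hfib
    rw [mul_comm]
    exact hfib.symm
  exact this

lemma endgame {p n m d : ℕ} (hp : p.Prime) (hpodd : Odd p) (hn : Odd n)
    (hmeven : Even m)
    (hdvd : m * (p ^ d - 1) ∣ p ^ n - 1) : False := by
  have hp1 : 1 ≤ p := hp.one_lt.le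
  have hp2 : 2 ≤ p := hp.two_le
  have hfac : (p - 1) * (∑ j ∈ Finset.range n, p ^ j) = p ^ n - 1 := by
    have hgeo : (∑ j ∈ Finset.range n, (p : ℤ) ^ j) * ((p : ℤ) - 1) = (p : ℤ) ^ n - 1 :=
      geom_sum_mul (p : ℤ) n
    have h2 : (((p - 1) * (∑ j ∈ Finset.range n, p ^ j) : ℕ) : ℤ)
        = ((p ^ n - 1 : ℕ) : ℤ) := by
      push_cast [Nat.cast_sub hp1, Nat.cast_sub (Nat.one_le_pow _ _ hp.pos)]
      linear_combination hgeo
    exact_mod_cast h2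
  have hOodd : ¬ (2 ∣ (∑ j ∈ Finset.range n, p ^ j)) := by
    intro hcon
    have h0 : (((∑ j ∈ Finset.range n, p ^ j : ℕ) : ZMod 2)) = 0 := by
      exact_mod_cast (ZMod.natCast_eq_zero_iff _ 2).mpr hcon
    have h1 : (((∑ j ∈ Finset.range n, p ^ j : ℕ) : ZMod 2)) = 1 := by
      push_cast
      have hp2' : ((p : ZMod 2)) = 1 := by
        obtain ⟨t, ht⟩ := hpodd
        rw [ht]; push_cast; ring_nf
        simp [CharTwo.two_eq_zero]
      rw [Finset.sum_congr rfl (fun j _ => by rw [hp2', one_pow])]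
      rw [Finset.sum_const, Finset.card_range, nsmul_eq_mul, mul_one]
      obtain ⟨t, ht⟩ := hn
      rw [ht]; push_cast; ring_nf
      simp [CharTwo.two_eq_zero]
    rw [h0] at h1
    exact one_ne_zero h1.symm
  have h1 : (p - 1) ∣ (p ^ d - 1) := by
    have := Nat.sub_dvd_pow_sub_pow p 1 d
    simpa using this
  have h2 : 2 * (p - 1) ∣ 2 * (p ^ d - 1) := mul_dvd_mul_left 2 h1
  have h3 : 2 * (p ^ d - 1) ∣ m * (p ^ d - 1) :=
    mul_dvd_mul_right hmeven.two_dvd _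
  have h4 : 2 * (p - 1) ∣ (p - 1) * (∑ j ∈ Finset.range n, p ^ j) := by
    rw [hfac]
    exact h2.trans (h3.trans hdvd)
  have h5 : (p - 1) * 2 ∣ (p - 1) * (∑ j ∈ Finset.range n, p ^ j) := by
    rwa [mul_comm 2 (p - 1)] at h4
  have h6 : 2 ∣ (∑ j ∈ Finset.range n, p ^ j) :=
    (Nat.mul_dvd_mul_iff_left (by omega : 0 < p - 1)).mp h5
  exact hOodd h6

lemma prod_inj (hneg : (-1 : F) ∈ mthPowers F m) {Cs X : Finset F}
    (hC : (paleyGraph F m).IsClique (Cs : Set F))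
    (hX : ∀ x ∈ X, ∀ y ∈ X, x ≠ y → ¬ (paleyGraph F m).Adj x y) :
    ∀ a ∈ Cs ×ˢ X, ∀ b ∈ Cs ×ˢ X, a.2 - a.1 = b.2 - b.1 → a = b := by
  rintro ⟨c, x⟩ hax ⟨c', x'⟩ hbx h
  rw [Finset.mem_product] at hax hbx
  simp only at h
  by_cases hcc : c = c'
  · subst hcc
    have : x = x' := by
      have := sub_left_injective (G := F) h
      exact this
    rw [this]
  · exfalso
    have hadj : (paleyGraph F m).Adj c c' :=
      hC (Finset.mem_coe.mpr hax.1) (Finset.mem_coe.mpr hbx.1) hcc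
    have hxx : x ≠ x' := by
      rintro rfl
      apply hcc
      have : c - c' = 0 := by linear_combination -h
      linear_combination this
    have hadj2 : (paleyGraph F m).Adj x x' := by
      rw [paley_adj hneg] at hadj ⊢
      refine ⟨hxx, ?_⟩
      have hd : x - x' = c - c' := by linear_combination h
      rw [hd]
      exact hadj.2
    exact hX x hax.2 x' hbx.2 hxx hadj2

lemma smul_clique (hneg : (-1 : F) ∈ mthPowers F m) {s : F} (hs : s ∈ Sfin F m)
    {Cs : Finset F} {k : ℕ} (h : (paleyGraph F m).IsNClique k Cs) :
    (paleyGraph F m).IsNClique k (Cs.image (s * ·)) := by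
  constructor
  · intro u hu v hv huv
    rw [Finset.coe_image, Set.mem_image] at hu hv
    obtain ⟨c, hc, rfl⟩ := hu
    obtain ⟨c', hc', rfl⟩ := hv
    have hcc : c ≠ c' := fun hcon => huv (by rw [hcon])
    have hadj := h.1 hc hc' hcc
    rw [paley_adj hneg] at hadj ⊢
    refine ⟨huv, ?_⟩
    have hd : s * c - s * c' = s * (c - c') := by ring
    rw [hd]
    exact Sfin_mul_mem hs hadj.2
  · rw [Finset.card_image_of_injective _ (mul_right_injective₀ (Sfin_ne_zero hs)), h.2]

end Stmt16Aux

open Finset Stmt16Aux in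
/-- For `q = p^n` with `n` odd and `m` even, `ω(Γ_{q,m}) ≠ χ(Γ_{q,m})`. -/
theorem stmt16 (p n q m : ℕ) (hp : p.Prime) (hpodd : Odd p) (hn : Odd n)
    (hq : q = p ^ n) (hm : 1 < m) (hmeven : Even m) (hdvd : 2 * m ∣ q - 1)
    (F : Type*) [Field F] [Fintype F] (hF : Fintype.card F = q) :
    ((paleyGraph F m).cliqueNum : ℕ∞) ≠ (paleyGraph F m).chromaticNumber := by
  classical
  intro hcontra
  haveI : Fact p.Prime := ⟨hp⟩
  have hm0 : m ≠ 0 := by omega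
  have hn1 : 1 ≤ n := hn.pos
  have hq1 : 1 < q := by
    rw [hq]
    calc 1 < p := hp.one_lt
      _ ≤ p ^ n := Nat.le_self_pow (by omega) p
  have hF1 : 1 < Fintype.card F := by rw [hF]; exact hq1
  have hmdvd : m ∣ Fintype.card F - 1 := by
    rw [hF]
    exact dvd_trans ⟨2, by ring⟩ hdvd
  have h2mdvd : 2 * m ∣ Fintype.card F - 1 := by rw [hF]; exact hdvd
  have hneg : (-1 : F) ∈ mthPowers F m := neg_one_mem hm0 h2mdvd
  set Γ := paleyGraph F m with hΓ
  set k := Γ.cliqueNum with hkdef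
  -- `k ≥ 2`
  have hadj01 : Γ.Adj 0 1 := by
    rw [hΓ, paley_adj hneg]
    refine ⟨by norm_num, ?_⟩
    rw [zero_sub]
    exact mem_Sfin.mpr hneg
  have hk2 : 2 ≤ k := by
    have hcl : Γ.IsClique (({0, 1} : Finset F) : Set F) := by
      intro a ha b hb hab
      simp only [Finset.coe_insert, Set.mem_insert_iff, Finset.coe_singleton,
        Set.mem_singleton_iff] at ha hb
      rcases ha with rfl | rfl <;> rcases hb with rfl | rfl
      · exact absurd rfl hab
      · exact hadj01
      · exact hadj01.symm
      · exact absurd rfl hab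
    have hcard01 : ({0, 1} : Finset F).card = 2 := by
      rw [Finset.card_insert_of_notMem (by simp), Finset.card_singleton]
    calc 2 = ({0, 1} : Finset F).card := hcard01.symm
      _ ≤ k := SimpleGraph.IsClique.card_le_cliqueNum (tc := hcl)
  -- a proper coloring with `k` colors
  have hcolk : Γ.Colorable k := by
    rw [← SimpleGraph.chromaticNumber_le_iff_colorable, ← hcontra]
  obtain ⟨co⟩ := hcolk
  -- a maximum clique
  obtain ⟨Cs, hCs⟩ := Γ.exists_isNClique_cliqueNum
  rw [← hkdef] at hCs
  -- color classes are cocliques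
  have hclassco : ∀ i : Fin k, ∀ x ∈ Finset.univ.filter (fun x => co x = i),
      ∀ y ∈ Finset.univ.filter (fun x => co x = i), x ≠ y → ¬ Γ.Adj x y := by
    intro i x hx y hy hne hadj
    rw [Finset.mem_filter] at hx hy
    exact (co.valid hadj) (hx.2.trans hy.2.symm)
  -- each color class has size exactly `q / k`
  have hXle : ∀ i : Fin k, k * (Finset.univ.filter (fun x => co x = i)).card
      ≤ Fintype.card F := by
    intro i
    have hinj := prod_inj hneg hCs.1 (hclassco i)
    calc k * (Finset.univ.filter (fun x => co x = i)).card
        = (Cs ×ˢ (Finset.univ.filter (fun x => co x = i))).card := by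
          rw [Finset.card_product, hCs.2]
      _ ≤ (Finset.univ : Finset F).card := by
          apply Finset.card_le_card_of_injOn (fun a => a.2 - a.1)
            (fun _ _ => Finset.mem_univ _)
          intro a ha b hb hab
          exact hinj a (Finset.mem_coe.mp ha) b (Finset.mem_coe.mp hb) hab
      _ = Fintype.card F := Finset.card_univ
  have hsum : ∑ i : Fin k, (Finset.univ.filter (fun x => co x = i)).card
      = Fintype.card F := by
    rw [← Finset.card_univ (α := F)]
    exact (Finset.card_eq_sum_card_fiberwise (fun x _ => Finset.mem_univ (co x))).symm
  have hXeq : ∀ i : Fin k, k * (Finset.univ.filter (fun x => co x = i)).card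
      = Fintype.card F := by
    by_contra hcon
    push_neg at hcon
    obtain ⟨i₀, hi₀⟩ := hcon
    have hlt := lt_of_le_of_ne (hXle i₀) hi₀
    have hstrict : ∑ i : Fin k, k * (Finset.univ.filter (fun x => co x = i)).card
        < ∑ _i : Fin k, Fintype.card F :=
      Finset.sum_lt_sum (fun i _ => hXle i) ⟨i₀, Finset.mem_univ _, hlt⟩
    rw [← Finset.mul_sum, hsum] at hstrict
    rw [Finset.sum_const, Finset.card_univ, Fintype.card_fin, smul_eq_mul] at hstrict
    have hk1 : 1 ≤ k := by omega
    nlinarith [hstrict]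
  have hk0 : 0 < k := by omega
  set X := Finset.univ.filter (fun x => co x = (⟨0, hk0⟩ : Fin k)) with hXdef
  have hXcard : k * X.card = Fintype.card F := hXeq _
  have hXcoX : ∀ x ∈ X, ∀ y ∈ X, x ≠ y → ¬ Γ.Adj x y := hclassco _
  have hXpos : 0 < X.card := by
    rcases Nat.eq_zero_or_pos X.card with h | h
    · rw [h, mul_zero] at hXcard; omega
    · exact h
  have hXlt : X.card < Fintype.card F := by nlinarith [hXcard, hk2, hXpos]
  -- k divides q
  have hkdvd : k ∣ p ^ n := ⟨X.card, by rw [← hq, ← hF]; exact hXcard.symm⟩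
  obtain ⟨d, hdn, hkpd⟩ := (Nat.dvd_prime_pow hp).mp hkdvd
  -- characteristic of F
  have hchar : CharP F p := by
    haveI hr := ringChar.charP F
    have hrprime : (ringChar F).Prime := CharP.char_is_prime F (ringChar F)
    obtain ⟨n', hn'p, hcard⟩ := FiniteField.card F (ringChar F)
    have hdvdp : ringChar F ∣ p ^ n := by
      rw [← hq, ← hF, hcard]
      exact dvd_pow_self _ (by exact_mod_cast n'.pos.ne')
    have : ringChar F = p :=
      (Nat.prime_dvd_prime_iff_eq hrprime hp).mp (hrprime.dvd_of_dvd_pow hdvdp)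
    rwa [this] at hr
  haveI := hchar
  -- a primitive additive character
  have hrQ : ringChar ℚ ≠ ringChar F := by
    have h1 : ringChar ℚ = 0 := ringChar.eq_zero
    have h2 : ringChar F = p := CharP.eq F (ringChar.charP F) hchar
    rw [h1, h2]
    exact fun hcon => hp.ne_zero hcon.symm
  set PC := AddChar.FiniteField.primitiveChar F ℚ hrQ with hPC
  set K' := CyclotomicField PC.n ℚ with hK'
  set ψ : AddChar F K' := PC.char with hψdef
  haveI : CharZero K' := charZero_of_injective_algebraMap (algebraMap ℚ K').injective
  have horthR : ∀ bb : F, bb ≠ 0 → ∑ t : F, ψ (t * bb) = 0 := by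
    intro bb hbb
    have h := AddChar.sum_mulShift bb PC.prim
    rw [if_neg hbb] at h
    exact_mod_cast h
  have horthL : ∀ bb : F, bb ≠ 0 → ∑ t : F, ψ (bb * t) = 0 := by
    intro bb hbb
    rw [show (∑ t : F, ψ (bb * t)) = ∑ t : F, ψ (t * bb) from
      Finset.sum_congr rfl (fun t _ => by rw [mul_comm])]
    exact horthR bb hbb
  -- pick a nonzero frequency of X
  have hXA : ∃ a : F, a ≠ 0 ∧ (∑ x ∈ X, ψ (x * a)) ≠ 0 := by
    by_contra hcon
    push_neg at hcon
    obtain ⟨x₀, hx₀⟩ := Finset.card_pos.mp hXpos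
    have hT1 : ∑ a : F, (∑ x ∈ X, ψ (x * a)) * ψ (-(x₀ * a)) = (Fintype.card F : K') := by
      have hswap : ∀ a : F, (∑ x ∈ X, ψ (x * a)) * ψ (-(x₀ * a))
          = ∑ x ∈ X, ψ ((x - x₀) * a) := by
        intro a
        rw [Finset.sum_mul]
        refine Finset.sum_congr rfl (fun x _ => ?_)
        rw [← AddChar.map_add_eq_mul]
        congr 1
        ring
      rw [Finset.sum_congr rfl (fun a _ => hswap a), Finset.sum_comm]
      rw [Finset.sum_eq_single x₀
        (fun x hxX hne => horthL (x - x₀) (sub_ne_zero.mpr hne))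
        (fun h => absurd hx₀ h)]
      simp [AddChar.map_zero_eq_one]
    have hT2 : ∑ a : F, (∑ x ∈ X, ψ (x * a)) * ψ (-(x₀ * a)) = (X.card : K') := by
      rw [Finset.sum_eq_single 0
        (fun a _ ha => by rw [hcon a ha, zero_mul])
        (fun h => absurd (Finset.mem_univ 0) h)]
      simp [AddChar.map_zero_eq_one]
    rw [hT1] at hT2
    have : Fintype.card F = X.card := Nat.cast_injective hT2
    omega
  obtain ⟨a₀, ha₀, hXAne⟩ := hXA
  set b := -a₀ with hb
  set Sf := Sfin F m with hSfdef
  have hcardS : m * Sf.card = Fintype.card F - 1 := card_Sfin_mul hm0 hmdvd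
  -- tiling: for each s ∈ S, the scaled clique s·Cs tiles with X
  have Hzero : ∀ s ∈ Sf, (∑ c ∈ Cs, ψ (c * (s * b))) = 0 := by
    intro s hs
    have hcl' := smul_clique hneg hs hCs
    have hinj' := prod_inj hneg hcl'.1 hXcoX
    have hcards : ((Cs.image (s * ·)) ×ˢ X).card = Fintype.card F := by
      rw [Finset.card_product, hcl'.2, hXcard]
    have himg : ((Cs.image (s * ·)) ×ˢ X).image (fun a : F × F => a.2 - a.1)
        = Finset.univ := by
      apply Finset.eq_univ_of_card
      rw [Finset.card_image_of_injOn, hcards]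
      intro a ha b' hb' hab
      exact hinj' a (Finset.mem_coe.mp ha) b' (Finset.mem_coe.mp hb') hab
    have hzero0 : (∑ a ∈ (Cs.image (s * ·)) ×ˢ X, ψ ((a.2 - a.1) * a₀)) = 0 := by
      calc (∑ a ∈ (Cs.image (s * ·)) ×ˢ X, ψ ((a.2 - a.1) * a₀))
          = ∑ t ∈ ((Cs.image (s * ·)) ×ˢ X).image (fun a : F × F => a.2 - a.1),
              ψ (t * a₀) := by rw [Finset.sum_image hinj']
        _ = ∑ t : F, ψ (t * a₀) := by rw [himg]
        _ = 0 := horthR a₀ ha₀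
    have hfact : (∑ a ∈ (Cs.image (s * ·)) ×ˢ X, ψ ((a.2 - a.1) * a₀))
        = (∑ c ∈ Cs.image (s * ·), ψ (-(c * a₀))) * (∑ x ∈ X, ψ (x * a₀)) := by
      rw [Finset.sum_product, Finset.sum_mul_sum]
      refine Finset.sum_congr rfl fun c _ => Finset.sum_congr rfl fun x _ => ?_
      rw [← AddChar.map_add_eq_mul]
      congr 1
      ring
    have h2 : (∑ c ∈ Cs.image (s * ·), ψ (-(c * a₀))) = 0 := by
      rcases mul_eq_zero.mp (hfact ▸ hzero0) with h | h
      · exact h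
      · exact absurd h hXAne
    have h3 : ∑ c ∈ Cs, ψ (-(s * c * a₀)) = 0 := by
      rw [Finset.sum_image (fun c _ c' _ hcc => mul_left_cancel₀ (Sfin_ne_zero hs) hcc)] at h2
      exact h2
    calc ∑ c ∈ Cs, ψ (c * (s * b)) = ∑ c ∈ Cs, ψ (-(s * c * a₀)) := by
          refine Finset.sum_congr rfl fun c _ => ?_
          congr 1
          rw [hb]
          ring
      _ = 0 := h3
  -- the key identity
  set η := ∑ s ∈ Sf, ψ (s * b) with hη
  have hkey : (0 : K') = (k : K') * ((Sf.card : K') + ((k - 1 : ℕ) : K') * η) := by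
    have h1 : (0 : K') = ∑ s ∈ Sf, (∑ c ∈ Cs, ψ (c * (s * b)))
        * (∑ c' ∈ Cs, ψ (-(c' * (s * b)))) := by
      symm
      apply Finset.sum_eq_zero
      intro s hs
      rw [Hzero s hs, zero_mul]
    have h2 : ∀ s ∈ Sf, (∑ c ∈ Cs, ψ (c * (s * b))) * (∑ c' ∈ Cs, ψ (-(c' * (s * b))))
        = ∑ c ∈ Cs, ∑ c' ∈ Cs, ψ ((c - c') * (s * b)) := by
      intro s _
      rw [Finset.sum_mul_sum]
      refine Finset.sum_congr rfl fun c _ => Finset.sum_congr rfl fun c' _ => ?_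
      rw [← AddChar.map_add_eq_mul]
      congr 1
      ring
    rw [Finset.sum_congr rfl h2] at h1
    have h3 : ∑ s ∈ Sf, ∑ c ∈ Cs, ∑ c' ∈ Cs, ψ ((c - c') * (s * b))
        = ∑ c ∈ Cs, ∑ c' ∈ Cs, ∑ s ∈ Sf, ψ ((c - c') * (s * b)) := by
      rw [Finset.sum_comm]
      exact Finset.sum_congr rfl fun c _ => Finset.sum_comm
    rw [h3] at h1
    have h4 : ∀ c ∈ Cs, ∀ c' ∈ Cs, (∑ s ∈ Sf, ψ ((c - c') * (s * b)))
        = if c' = c then (Sf.card : K') else η := by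
      intro c hc c' hc'
      by_cases hcc : c' = c
      · subst hcc
        rw [if_pos rfl]
        simp [sub_self, zero_mul, AddChar.map_zero_eq_one]
      · rw [if_neg hcc]
        have hδ : c - c' ∈ Sf := clique_sub_mem hneg hCs.1 hc hc' (fun hcon => hcc hcon.symm)
        rw [hη, hSfdef]
        conv_rhs => rw [← Sfin_image_mul hδ,
          Finset.sum_image (fun s _ s' _ hss => mul_left_cancel₀ (Sfin_ne_zero hδ) hss)]
        refine Finset.sum_congr rfl fun s _ => ?_
        congr 1
        ring
    have h5 : ∑ c ∈ Cs, ∑ c' ∈ Cs, (if c' = c then (Sf.card : K') else η)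
        = (k : K') * ((Sf.card : K') + ((k - 1 : ℕ) : K') * η) := by
      have hinner : ∀ c ∈ Cs, (∑ c' ∈ Cs, if c' = c then (Sf.card : K') else η)
          = (Sf.card : K') + ((k - 1 : ℕ) : K') * η := by
        intro c hc
        rw [← Finset.add_sum_erase _ _ hc, if_pos rfl]
        congr 1
        rw [Finset.sum_congr rfl (fun c' hc' => if_neg (Finset.ne_of_mem_erase hc'))]
        rw [Finset.sum_const, Finset.card_erase_of_mem hc, hCs.2, nsmul_eq_mul]
      rw [Finset.sum_congr rfl hinner, Finset.sum_const, hCs.2, nsmul_eq_mul]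
    rw [Finset.sum_congr rfl (fun c hc => Finset.sum_congr rfl (fun c' hc' => h4 c hc c' hc')),
      h5] at h1
    exact h1
  have hk0K : (k : K') ≠ 0 := Nat.cast_ne_zero.mpr (by omega)
  have hmain : (Sf.card : K') + ((k - 1 : ℕ) : K') * η = 0 := by
    rcases mul_eq_zero.mp hkey.symm with h | h
    · exact absurd h hk0K
    · exact h
  -- η is an algebraic integer
  have hψint : ∀ z : F, IsIntegral ℤ (ψ z) := by
    intro z
    have hzp : (ψ z) ^ p = 1 := by
      rw [← AddChar.map_nsmul_eq_pow]
      have hz0 : (p • z) = 0 := by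
        rw [nsmul_eq_mul, CharP.cast_eq_zero F p, zero_mul]
      rw [hz0, AddChar.map_zero_eq_one]
    refine ⟨Polynomial.X ^ p - 1, ?_, ?_⟩
    · have := Polynomial.monic_X_pow_sub_C (R := ℤ) 1 hp.pos.ne'
      simpa using this
    · simp only [Polynomial.eval₂_sub, Polynomial.eval₂_X_pow, Polynomial.eval₂_one]
      rw [hzp]
      ring
  have hηint : IsIntegral ℤ η := by
    rw [hη]
    exact IsIntegral.sum _ (fun s _ => hψint _)
  have hk1ne : ((k - 1 : ℕ) : K') ≠ 0 := Nat.cast_ne_zero.mpr (by omega)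
  have hk1neQ : ((k - 1 : ℕ) : ℚ) ≠ 0 := Nat.cast_ne_zero.mpr (by omega)
  have hrr : η = algebraMap ℚ K' (-(Sf.card : ℚ) / ((k - 1 : ℕ) : ℚ)) := by
    rw [map_div₀, map_neg, map_natCast, map_natCast, eq_div_iff hk1ne]
    linear_combination hmain
  haveI : IsScalarTower ℤ ℚ K' := IsScalarTower.of_algebraMap_eq (fun x => by simp)
  have hintQ : IsIntegral ℤ (-(Sf.card : ℚ) / ((k - 1 : ℕ) : ℚ)) := by
    rw [hrr] at hηint
    exact (isIntegral_algebraMap_iff (algebraMap ℚ K').injective).mp hηint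
  obtain ⟨z, hz⟩ := IsIntegrallyClosed.isIntegral_iff.mp hintQ
  have hz2 : (z : ℚ) * ((k - 1 : ℕ) : ℚ) = -(Sf.card : ℚ) := by
    have hzq : ((z : ℚ)) = -(Sf.card : ℚ) / ((k - 1 : ℕ) : ℚ) := by exact_mod_cast hz
    rw [hzq, div_mul_cancel₀ _ hk1neQ]
  have hz3 : z * ((k - 1 : ℕ) : ℤ) = -((Sf.card : ℤ)) := by exact_mod_cast hz2
  have hdvd1 : ((k - 1 : ℕ) : ℤ) ∣ ((Sf.card : ℤ)) := ⟨-z, by linarith⟩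
  have hdvd2 : (k - 1) ∣ Sf.card := by exact_mod_cast hdvd1
  have hdvd3 : m * (k - 1) ∣ Fintype.card F - 1 := by
    rw [← hcardS]
    exact mul_dvd_mul_left m hdvd2
  rw [hF, hq, hkpd] at hdvd3
  exact endgame hp hpodd hn hmeven hdvd3
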